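/- arXiv:2412.21078 — 2 statements merged into one kernel-verified Lean document; each statement's English description precedes it below -/
import Mathlib

section
/- Let N ≥ 1, let 1 < p < 2, let ν ∈ ℝᴺ∖{0}, and let Y, M ∈ 𝕊(N) with −Y ≤ M. Then −F_p(ν, Y) ≥ |ν|^{p−2}·((p − 1)·λ_N(Y) − (N − 1)·λ_N(M)). -/
/-! Since `-Y ≤ M`, testing against a unit eigenvector shows that every eigenvalue of `Y` is at
least `-λ_N(M)`; keeping the top eigenvalue and bounding the other `N - 1` gives
`tr Y ≥ λ_N(Y) - (N - 1) λ_N(M)`. As `p - 2 < 0`, the Rayleigh bound `⟨Yν, ν⟩ ≤ λ_N(Y) |ν|²`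
gives `(p - 2) ⟨Yν, ν⟩ / |ν|² ≥ (p - 2) λ_N(Y)`, and the two bounds add up to the claim. -/

open Matrix

/-- The Loewner partial order on matrices: `X ≤ Y` iff `Y - X` is positive semidefinite. -/
def Loewner {n : Type*} [Fintype n] (X Y : Matrix n n ℝ) : Prop := (Y - X).PosSemidef

/-- The eigenvalues of a real symmetric matrix, listed in increasing order. -/
noncomputable def eigs {N : ℕ} (X : Matrix (Fin N) (Fin N) ℝ) : Fin N → ℝ :=
  if h : X.IsHermitian then h.eigenvalues ∘ Tuple.sort h.eigenvalues else 0

/-- The smallest eigenvalue of a real symmetric matrix. -/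
noncomputable def lam1 {N : ℕ} (X : Matrix (Fin N) (Fin N) ℝ) : ℝ := ⨅ i, eigs X i

/-- The largest eigenvalue of a real symmetric matrix. -/
noncomputable def lamN {N : ℕ} (X : Matrix (Fin N) (Fin N) ℝ) : ℝ := ⨆ i, eigs X i

/-- The p-Laplace function
`F_p(ν, X) = −|ν|^{p−2} (tr X + (p−2) ⟨Xν, ν⟩ / |ν|²)`. -/
noncomputable def Fp {N : ℕ} (p : ℝ) (ν : EuclideanSpace ℝ (Fin N))
    (X : Matrix (Fin N) (Fin N) ℝ) : ℝ :=
  -(‖ν‖ ^ (p - 2)) * (X.trace +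
    (p - 2) * (X.mulVec ((WithLp.equiv 2 (Fin N → ℝ)) ν) ⬝ᵥ (WithLp.equiv 2 (Fin N → ℝ)) ν)
      / ‖ν‖ ^ (2 : ℕ))

theorem EuclideanSpace.ofLp_dotProduct_ofLp_self {n : Type*} [Fintype n]
    (x : EuclideanSpace ℝ n) : x.ofLp ⬝ᵥ x.ofLp = ‖x‖ ^ 2 := by
  rw [← real_inner_self_eq_norm_sq]
  rfl

namespace Matrix.IsHermitian

variable {n : Type*} [Fintype n] [DecidableEq n] {X : Matrix n n ℝ} (hX : X.IsHermitian)
include hX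

theorem posSemidef_smul_one_sub {c : ℝ} (hc : ∀ i, hX.eigenvalues i ≤ c) :
    (c • (1 : Matrix n n ℝ) - X).PosSemidef := by
  have hdiag : c • (1 : Matrix n n ℝ) - X =
      Unitary.conjStarAlgAut ℝ _ hX.eigenvectorUnitary (diagonal fun i => c - hX.eigenvalues i) := by
    rw [← diagonal_sub, ← smul_one_eq_diagonal, map_sub, map_smul, map_one]
    conv_lhs => rw [hX.spectral_theorem]
    simp
  rw [hdiag, Unitary.conjStarAlgAut_apply,
    IsUnit.posSemidef_star_right_conjugate_iff Unitary.isUnit_coe, posSemidef_diagonal_iff]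
  exact fun i => sub_nonneg.mpr (hc i)

theorem dotProduct_mulVec_le_mul_dotProduct {c : ℝ} (hc : ∀ i, hX.eigenvalues i ≤ c)
    (v : n → ℝ) : v ⬝ᵥ X *ᵥ v ≤ c * (v ⬝ᵥ v) := by
  have := (hX.posSemidef_smul_one_sub hc).dotProduct_mulVec_nonneg v
  simp only [star_trivial, sub_mulVec, smul_mulVec, one_mulVec, dotProduct_sub,
    dotProduct_smul, smul_eq_mul] at this
  linarith

theorem dotProduct_eigenvectorBasis_self (i : n) :
    ⇑(hX.eigenvectorBasis i) ⬝ᵥ ⇑(hX.eigenvectorBasis i) = 1 := by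
  rw [EuclideanSpace.ofLp_dotProduct_ofLp_self, hX.eigenvectorBasis.orthonormal.1 i, one_pow]

end Matrix.IsHermitian

theorem eigs_eq {N : ℕ} {X : Matrix (Fin N) (Fin N) ℝ} (hX : X.IsHermitian) :
    eigs X = hX.eigenvalues ∘ Tuple.sort hX.eigenvalues :=
  dif_pos hX

namespace Matrix.IsHermitian

variable {N : ℕ} {X : Matrix (Fin N) (Fin N) ℝ}

theorem eigenvalues_le_lamN (hX : X.IsHermitian) (i : Fin N) :
    hX.eigenvalues i ≤ lamN X := by
  have h : eigs X ((Tuple.sort hX.eigenvalues).symm i) = hX.eigenvalues i := by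
    simp [eigs_eq hX]
  rw [lamN, ← h]
  exact le_ciSup (Set.finite_range _).bddAbove _

theorem exists_eigenvalues_eq_lamN [Nonempty (Fin N)] (hX : X.IsHermitian) :
    ∃ i, hX.eigenvalues i = lamN X := by
  obtain ⟨i, hi⟩ := Finite.exists_max (eigs X)
  refine ⟨Tuple.sort hX.eigenvalues i, le_antisymm (hX.eigenvalues_le_lamN _) ?_⟩
  have h : eigs X i = hX.eigenvalues (Tuple.sort hX.eigenvalues i) := by simp [eigs_eq hX]
  rw [lamN, ← h]
  exact ciSup_le hi

theorem dotProduct_mulVec_le_lamN_mul (hX : X.IsHermitian) (v : Fin N → ℝ) :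
    v ⬝ᵥ X *ᵥ v ≤ lamN X * (v ⬝ᵥ v) :=
  hX.dotProduct_mulVec_le_mul_dotProduct hX.eigenvalues_le_lamN v

theorem lamN_add_mul_le_trace [Nonempty (Fin N)] (hX : X.IsHermitian) {c : ℝ}
    (hc : ∀ i, c ≤ hX.eigenvalues i) : lamN X + (N - 1) * c ≤ X.trace := by
  obtain ⟨i₀, hi₀⟩ := hX.exists_eigenvalues_eq_lamN
  have hrest : ((N : ℝ) - 1) * c ≤ ∑ i ∈ Finset.univ.erase i₀, hX.eigenvalues i := by
    simpa [Finset.card_erase_of_mem, Nat.cast_sub (Nat.one_le_of_lt i₀.2)] using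
      Finset.card_nsmul_le_sum (Finset.univ.erase i₀) hX.eigenvalues c fun i _ => hc i
  rw [hX.trace_eq_sum_eigenvalues, ← Finset.add_sum_erase _ _ (Finset.mem_univ i₀)]
  simp only [RCLike.ofReal_real_eq_id, id, hi₀]
  linarith

theorem neg_lamN_le_eigenvalues {Y M : Matrix (Fin N) (Fin N) ℝ}
    (hY : Y.IsHermitian) (hM : M.IsHermitian) (hYM : Loewner (-Y) M) (i : Fin N) :
    -lamN M ≤ hY.eigenvalues i := by
  set b := ⇑(hY.eigenvectorBasis i)
  have hb : b ⬝ᵥ b = 1 := hY.dotProduct_eigenvectorBasis_self i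
  have hYb : b ⬝ᵥ Y *ᵥ b = hY.eigenvalues i := by
    rw [hY.mulVec_eigenvectorBasis, dotProduct_smul, hb, smul_eq_mul, mul_one]
  have hMb : b ⬝ᵥ M *ᵥ b ≤ lamN M := by
    simpa [hb] using hM.dotProduct_mulVec_le_lamN_mul b
  have hsum : 0 ≤ b ⬝ᵥ M *ᵥ b + b ⬝ᵥ Y *ᵥ b := by
    simpa [add_mulVec, dotProduct_add] using hYM.dotProduct_mulVec_nonneg b
  linarith

end Matrix.IsHermitian

theorem pLaplace_classM_super_p_lt_two_general {N : ℕ} (hN : 1 ≤ N) (p : ℝ) (hp2 : p < 2)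
    (ν : EuclideanSpace ℝ (Fin N)) (hν : ν ≠ 0)
    (Y M : Matrix (Fin N) (Fin N) ℝ) (hY : Y.IsHermitian) (hM : M.IsHermitian)
    (hYM : Loewner (-Y) M) :
    -Fp p ν Y ≥ ‖ν‖ ^ (p - 2) * ((p - 1) * lamN Y - ((N : ℝ) - 1) * lamN M) := by
  have : Nonempty (Fin N) := Fin.pos_iff_nonempty.mp hN
  have hν_pos : 0 < ‖ν‖ := norm_pos_iff.mpr hν
  have htrace : lamN Y - (N - 1) * lamN M ≤ Y.trace := by
    simpa [sub_eq_add_neg] using hY.lamN_add_mul_le_trace (hY.neg_lamN_le_eigenvalues hM hYM)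
  have hrayleigh : Y *ᵥ ν.ofLp ⬝ᵥ ν.ofLp / ‖ν‖ ^ 2 ≤ lamN Y := by
    rw [div_le_iff₀ (by positivity), ← EuclideanSpace.ofLp_dotProduct_ofLp_self, dotProduct_comm]
    exact hY.dotProduct_mulVec_le_lamN_mul _
  have hdirectional : (p - 2) * lamN Y ≤ (p - 2) * (Y *ᵥ ν.ofLp ⬝ᵥ ν.ofLp / ‖ν‖ ^ 2) :=
    mul_le_mul_of_nonpos_left hrayleigh (by linarith)
  rw [Fp, neg_mul, neg_neg, mul_div_assoc, ge_iff_le]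
  exact mul_le_mul_of_nonneg_left (by simp only [WithLp.equiv_apply]; linarith) (by positivity)

/-- Supersolution bound for the p-Laplacian, case `1 < p < 2`:
if `−Y ≤ M` then `−F_p(ν, Y) ≥ |ν|^{p−2} ((p − 1) λ_N(Y) − (N − 1) λ_N(M))`. -/
theorem pLaplace_classM_super_p_lt_two {N : ℕ} (hN : 1 ≤ N) (p : ℝ) (hp1 : 1 < p) (hp2 : p < 2)
    (ν : EuclideanSpace ℝ (Fin N)) (hν : ν ≠ 0)
    (Y M : Matrix (Fin N) (Fin N) ℝ) (hY : Y.IsHermitian) (hM : M.IsHermitian)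
    (hYM : Loewner (-Y) M) :
    -Fp p ν Y ≥ ‖ν‖ ^ (p - 2) * ((p - 1) * lamN Y - ((N : ℝ) - 1) * lamN M) :=
  pLaplace_classM_super_p_lt_two_general hN p hp2 ν hν Y M hY hM hYM
end

section
/- Let N ≥ 2, let d ≥ 3 be an odd integer, let h : ℝ → ℝ be the real d-th root (the inverse of the strictly increasing bijection t ↦ t^d of ℝ), and define F : 𝕊(N) → ℝ by F(X) = −Σ_{j=1}^{N} h(λ_j(X)). Then F is not of Class U: for every λ > 0 and every K ∈ ℝ there exists X ∈ 𝕊(N) with X ≤ 0 such that F(X) − F(0) < λ·tr(0 − X) + K. (One may take X_n = −diag(n, 1/n, …, 1/n) for n large.) -/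
open Matrix

/-- The eigenvalues of the scalar matrix `c • 1` are all `c` (when `N ≥ 1`). -/
lemma eigs_smul_one {N : ℕ} (hN : 0 < N) (c : ℝ) (j : Fin N) :
    eigs (c • (1 : Matrix (Fin N) (Fin N) ℝ)) j = c := by
  haveI : NeZero N := ⟨hN.ne'⟩
  have hX : (c • (1 : Matrix (Fin N) (Fin N) ℝ)).IsHermitian := by
    unfold Matrix.IsHermitian
    ext i k
    simp [Matrix.conjTranspose_apply, Matrix.one_apply]
    by_cases h : i = k <;> by_cases h' : k = i <;> simp_all <;> omega
  rw [eigs, dif_pos hX]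
  have hmem : hX.eigenvalues (Tuple.sort hX.eigenvalues j) ∈
      spectrum ℝ (c • (1 : Matrix (Fin N) (Fin N) ℝ)) :=
    hX.eigenvalues_mem_spectrum_real _
  have halg : c • (1 : Matrix (Fin N) (Fin N) ℝ) = algebraMap ℝ _ c := by
    simp [Algebra.algebraMap_eq_smul_one]
  have hspec : spectrum ℝ (c • (1 : Matrix (Fin N) (Fin N) ℝ)) = {c} := by
    rw [halg]; exact spectrum.scalar_eq c
  rw [hspec] at hmem
  simpa using hmem

/-- For odd `d ≥ 3` and `h` the real d-th root, the function
`F(X) = −Σ_j h(λ_j(X))` is not of Class U: for every `λ > 0` and `K ∈ ℝ` there is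
`X ≤ 0` with `F(X) − F(0) < λ·tr(0 − X) + K`. -/
theorem dthRoot_sum_not_classU {N : ℕ} (hN : 2 ≤ N) (d : ℕ) (hd : Odd d) (hd3 : 3 ≤ d)
    (h : ℝ → ℝ) (hinv₁ : ∀ t : ℝ, h (t ^ d) = t) (hinv₂ : ∀ t : ℝ, (h t) ^ d = t)
    (F : Matrix (Fin N) (Fin N) ℝ → ℝ)
    (hF : ∀ X : Matrix (Fin N) (Fin N) ℝ, F X = -∑ j : Fin N, h (eigs X j)) :
    ∀ lam : ℝ, 0 < lam → ∀ K : ℝ,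
      ∃ X : Matrix (Fin N) (Fin N) ℝ, X.IsHermitian ∧
        Loewner X (0 : Matrix (Fin N) (Fin N) ℝ) ∧
        F X - F 0 < lam * ((0 : Matrix (Fin N) (Fin N) ℝ) - X).trace + K := by
  intro lam hlam K
  have hNpos : 0 < N := by omega
  set t : ℝ := max 1 (max (2 / lam) (|K| + 1)) with ht
  have ht1 : (1 : ℝ) ≤ t := le_max_left _ _
  have htpos : 0 < t := lt_of_lt_of_le one_pos ht1
  have ht2 : 2 / lam ≤ t := le_trans (le_max_left _ _) (le_max_right _ _)
  have htK : |K| + 1 ≤ t := le_trans (le_max_right _ _) (le_max_right _ _)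
  set c : ℝ := t ^ d with hc
  have hcpos : 0 < c := pow_pos htpos d
  refine ⟨(-c) • (1 : Matrix (Fin N) (Fin N) ℝ), ?_, ?_, ?_⟩
  · unfold Matrix.IsHermitian
    ext i k
    simp [Matrix.conjTranspose_apply, Matrix.one_apply]
    by_cases hik : i = k <;> by_cases h' : k = i <;> simp_all <;> omega
  · unfold Loewner
    have heq : (0 : Matrix (Fin N) (Fin N) ℝ) - (-c) • 1 = c • 1 := by
      rw [zero_sub, ← neg_smul, neg_neg]
    rw [heq, Matrix.smul_one_eq_diagonal]
    exact Matrix.posSemidef_diagonal_iff.mpr fun i => hcpos.le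
  · have heigsX : ∀ j, eigs ((-c) • (1 : Matrix (Fin N) (Fin N) ℝ)) j = -c :=
      eigs_smul_one hNpos (-c)
    have heigs0 : ∀ j : Fin N, eigs (0 : Matrix (Fin N) (Fin N) ℝ) j = 0 := by
      intro j
      have := eigs_smul_one hNpos (0 : ℝ) j
      simpa using this
    have hdne : d ≠ 0 := by omega
    have hh0 : h 0 = 0 := by
      have := hinv₁ 0
      simpa [zero_pow hdne] using this
    have hhc : h (-c) = -t := by
      have : (-t) ^ d = -c := by
        rw [hc, Odd.neg_pow hd]
      rw [← this, hinv₁]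
    have hFX : F ((-c) • (1 : Matrix (Fin N) (Fin N) ℝ)) = N * t := by
      rw [hF]
      have hterm : ∀ j : Fin N, h (eigs ((-c) • (1 : Matrix (Fin N) (Fin N) ℝ)) j) = -t :=
        fun j => by rw [heigsX, hhc]
      rw [Finset.sum_congr rfl (fun j _ => hterm j)]
      simp [Finset.sum_const, Finset.card_univ, mul_comm]
    have hF0 : F 0 = 0 := by
      rw [hF]
      simp [heigs0, hh0]
    have htr : ((0 : Matrix (Fin N) (Fin N) ℝ) - (-c) • 1).trace = N * c := by
      have heq : (0 : Matrix (Fin N) (Fin N) ℝ) - (-c) • 1 = c • 1 := by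
        rw [zero_sub, ← neg_smul, neg_neg]
      rw [heq]
      simp [Matrix.trace_smul, Matrix.trace_one, mul_comm]
    rw [hFX, hF0, htr]
    -- goal : N * t - 0 < lam * (N * c) + K
    have hNt1 : (1 : ℝ) ≤ N := by exact_mod_cast Nat.one_le_of_lt hN
    have ht2d : t ^ 2 ≤ t ^ d := pow_le_pow_right₀ ht1 (by omega)
    have hlt : lam * t ≥ 2 := by
      have := (div_le_iff₀ hlam).mp ht2
      linarith [mul_comm t lam]
    have h1 : lam * (N * c) ≥ 2 * (N * t) := by
      have h2 : lam * t ^ 2 ≥ 2 * t := by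
        have : lam * t ^ 2 = (lam * t) * t := by ring
        rw [this]
        nlinarith
      have h3 : lam * c ≥ lam * t ^ 2 := by
        rw [hc]; nlinarith
      nlinarith
    have hKt : -K < N * t := by
      have h4 : -K ≤ |K| := neg_le_abs K
      have h5 : (N : ℝ) * t ≥ t := by nlinarith
      linarith
    linarith
end
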